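/- Let π, π' be probability vectors in ℝ^N, let N ≥ 2, let the means μ_1, …, μ_N be pairwise distinct with common standard deviation σ > 0, let F_n be the corresponding Gaussian CDFs, and let M be the Gaussian kernel matrix with zero diagonal (M_{ji} = φ_i(μ_j) for i ≠ j, M_{jj} = 0). Define L⁻_i = min(π_i − π'_i, 0). Then the following are equivalent: (a) ∫_ℝ |Σ_{n=1}^N (π_n − π'_n) F_n(x)| dx = 0; (b) ‖NGMG(L⁻)‖₁ = ‖−M L⁻‖₁ = 0. Moreover each is equivalent to π = π'. -/

import Mathlib

/-!
A difference `F_a - F_b` of Gaussian CDFs is the convolution of the indicator of `(a, b]` with the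
centred Gaussian density, hence integrable. So when `∑ cₙ = 0` the function `f = ∑ cₙ Fₙ` is
continuous and integrable, and `∫ |f| = 0` forces `f ≡ 0`. Differentiating gives `∑ cₙ φₙ ≡ 0`,
and Gaussians with distinct means are linearly independent: at the points `x = 0, …, N - 1`,
after dividing by the centred density, `∑ cₙ φₙ(x)` becomes a Vandermonde system in the nodes
`exp (μₙ / σ²)`. Hence `c = 0`.

For the gradient: `M` has nonnegative entries and, as `N ≥ 2`, every column has a positive
off-diagonal entry, so `M L⁻ = 0` with `L⁻ ≤ 0` forces `L⁻ = 0`, i.e. `π' ≤ π`; since both have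
total mass one, `π = π'`.
-/

open MeasureTheory Matrix

/-- Gaussian density with mean `μ` and standard deviation `σ`. -/
noncomputable def gaussPDF (μ σ x : ℝ) : ℝ :=
  (1 / (σ * Real.sqrt (2 * Real.pi))) * Real.exp (-((x - μ) ^ 2) / (2 * σ ^ 2))

/-- Gaussian CDF with mean `μ` and standard deviation `σ`. -/
noncomputable def gaussCDF (μ σ x : ℝ) : ℝ :=
  ∫ s in Set.Iic x, gaussPDF μ σ s

/-- ℓ¹ norm on `Fin N → ℝ`. -/
noncomputable def l1norm {N : ℕ} (v : Fin N → ℝ) : ℝ :=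
  ∑ n, |v n|

open ProbabilityTheory Set
open scoped Convolution

theorem gaussPDF_eq_gaussianPDFReal {σ : ℝ} (hσ : 0 ≤ σ) (μ : ℝ) :
    gaussPDF μ σ = gaussianPDFReal μ (σ ^ 2).toNNReal := by
  ext x
  rw [gaussPDF, gaussianPDFReal_def, Real.coe_toNNReal _ (sq_nonneg σ), one_div,
    mul_comm (2 * Real.pi), Real.sqrt_mul (sq_nonneg σ), Real.sqrt_sq hσ]

theorem gaussPDF_pos {σ : ℝ} (hσ : 0 < σ) (μ x : ℝ) : 0 < gaussPDF μ σ x := by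
  rw [gaussPDF_eq_gaussianPDFReal hσ.le]
  exact gaussianPDFReal_pos _ _ _ (by simpa using hσ.ne')

theorem integrable_gaussPDF {σ : ℝ} (hσ : 0 ≤ σ) (μ : ℝ) : Integrable (gaussPDF μ σ) := by
  rw [gaussPDF_eq_gaussianPDFReal hσ]
  exact integrable_gaussianPDFReal _ _

theorem continuous_gaussPDF (μ σ : ℝ) : Continuous (gaussPDF μ σ) := by
  unfold gaussPDF
  fun_prop

theorem gaussPDF_zero_sub (μ σ x : ℝ) : gaussPDF 0 σ (x - μ) = gaussPDF μ σ x := by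
  rw [gaussPDF, gaussPDF, sub_zero]

theorem gaussCDF_zero_sub (μ σ x : ℝ) : gaussCDF 0 σ (x - μ) = gaussCDF μ σ x := by
  have h := (measurePreserving_sub_right volume μ).setIntegral_preimage_emb
    (measurableEmbedding_subRight μ) (gaussPDF 0 σ) (Iic (x - μ))
  simp only [preimage_sub_const_Iic, sub_add_cancel, gaussPDF_zero_sub] at h
  exact h.symm

theorem hasDerivAt_gaussCDF {σ : ℝ} (hσ : 0 ≤ σ) (μ x : ℝ) :
    HasDerivAt (gaussCDF μ σ) (gaussPDF μ σ x) x := by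
  have hint := integrable_gaussPDF hσ μ
  have h_eq : (fun y => gaussCDF μ σ 0 + ∫ s in (0 : ℝ)..y, gaussPDF μ σ s) = gaussCDF μ σ := by
    ext y
    rw [← intervalIntegral.integral_Iic_sub_Iic hint.integrableOn hint.integrableOn, gaussCDF,
      gaussCDF, add_sub_cancel]
  rw [← h_eq]
  exact (intervalIntegral.integral_hasDerivAt_right hint.intervalIntegrable
    (continuous_gaussPDF μ σ).aestronglyMeasurable.stronglyMeasurableAtFilter
    (continuous_gaussPDF μ σ).continuousAt).const_add _

theorem continuous_gaussCDF {σ : ℝ} (hσ : 0 ≤ σ) (μ : ℝ) : Continuous (gaussCDF μ σ) :=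
  continuous_iff_continuousAt.2 fun x => (hasDerivAt_gaussCDF hσ μ x).continuousAt

theorem gaussCDF_sub_gaussCDF_eq_convolution {σ : ℝ} (hσ : 0 ≤ σ) {a b : ℝ} (hab : a ≤ b)
    (x : ℝ) : gaussCDF a σ x - gaussCDF b σ x
      = ((Ioc a b).indicator 1 ⋆[ContinuousLinearMap.lsmul ℝ ℝ, volume] gaussPDF 0 σ) x := by
  have hint := integrable_gaussPDF hσ 0
  rw [convolution_lsmul]
  calc gaussCDF a σ x - gaussCDF b σ x = gaussCDF 0 σ (x - a) - gaussCDF 0 σ (x - b) := by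
        rw [gaussCDF_zero_sub, gaussCDF_zero_sub]
    _ = ∫ s in (x - b)..(x - a), gaussPDF 0 σ s :=
        intervalIntegral.integral_Iic_sub_Iic hint.integrableOn hint.integrableOn
    _ = ∫ t in a..b, gaussPDF 0 σ (x - t) := (intervalIntegral.integral_comp_sub_left _ x).symm
    _ = ∫ t in Ioc a b, gaussPDF 0 σ (x - t) := intervalIntegral.integral_of_le hab
    _ = ∫ t, (Ioc a b).indicator 1 t • gaussPDF 0 σ (x - t) := by
        rw [← integral_indicator measurableSet_Ioc]
        congr 1 with t
        simp [indicator_apply]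

theorem integrable_gaussCDF_sub_gaussCDF {σ : ℝ} (hσ : 0 ≤ σ) (a b : ℝ) :
    Integrable (fun x => gaussCDF a σ x - gaussCDF b σ x) := by
  wlog hab : a ≤ b generalizing a b
  · exact (this b a (le_of_not_ge hab)).neg.congr (ae_of_all _ fun x => neg_sub _ _)
  simp_rw [gaussCDF_sub_gaussCDF_eq_convolution hσ hab]
  have h_ind : Integrable ((Ioc a b).indicator (1 : ℝ → ℝ)) :=
    (integrableOn_const measure_Ioc_lt_top.ne).integrable_indicator measurableSet_Ioc
  exact h_ind.integrable_convolution _ (integrable_gaussPDF hσ 0)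

theorem gaussPDF_eq_mul_exp {σ : ℝ} (hσ : σ ≠ 0) (μ x : ℝ) :
    gaussPDF μ σ x
      = gaussPDF 0 σ x * (Real.exp (-μ ^ 2 / (2 * σ ^ 2)) * Real.exp (x * (μ / σ ^ 2))) := by
  rw [gaussPDF, gaussPDF, mul_assoc, ← Real.exp_add, ← Real.exp_add]
  congr 2
  field_simp
  ring

theorem gaussPDF_ne_zero {σ : ℝ} (hσ : σ ≠ 0) (μ x : ℝ) : gaussPDF μ σ x ≠ 0 := by
  have := Real.pi_pos
  unfold gaussPDF
  positivity

theorem linearIndependent_gaussPDF {N : ℕ} {σ : ℝ} (hσ : σ ≠ 0) {μ : Fin N → ℝ}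
    (hμ : Function.Injective μ) : LinearIndependent ℝ (fun n => gaussPDF (μ n) σ) := by
  rw [Fintype.linearIndependent_iff]
  intro c hc
  have hr : Function.Injective fun n => Real.exp (μ n / σ ^ 2) :=
    fun m n h => hμ ((div_left_inj' (pow_ne_zero 2 hσ)).1 (Real.exp_injective h))
  have hd : (fun n => c n * Real.exp (-μ n ^ 2 / (2 * σ ^ 2))) = 0 := by
    refine Matrix.eq_zero_of_forall_pow_sum_mul_pow_eq_zero hr fun k => ?_
    have hk : ∑ n, c n * gaussPDF (μ n) σ k = 0 := by simpa using congrFun hc (k : ℝ)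
    refine (mul_eq_zero.1 (Eq.trans ?_ hk)).resolve_left (gaussPDF_ne_zero hσ 0 k)
    rw [Finset.mul_sum]
    refine Finset.sum_congr rfl fun n _ => ?_
    rw [gaussPDF_eq_mul_exp hσ (μ n), ← Real.exp_nat_mul]
    ring
  intro n
  simpa [Real.exp_ne_zero] using congrFun hd n

theorem integrable_sum_mul_gaussCDF {ι : Type*} [Fintype ι] {σ : ℝ} (hσ : 0 ≤ σ) (μ : ι → ℝ)
    {c : ι → ℝ} (hc : ∑ n, c n = 0) : Integrable (fun x => ∑ n, c n * gaussCDF (μ n) σ x) := by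
  have h : (fun x => ∑ n, c n * gaussCDF (μ n) σ x)
      = fun x => ∑ n, c n * (gaussCDF (μ n) σ x - gaussCDF 0 σ x) := by
    ext x
    simp only [mul_sub, Finset.sum_sub_distrib, ← Finset.sum_mul, hc, zero_mul, sub_zero]
  rw [h]
  exact integrable_finsetSum _ fun n _ => (integrable_gaussCDF_sub_gaussCDF hσ _ _).const_mul _

theorem eq_zero_of_integral_abs_sum_mul_gaussCDF_eq_zero {N : ℕ} {σ : ℝ} (hσ : 0 < σ)
    {μ : Fin N → ℝ} (hμ : Function.Injective μ) {c : Fin N → ℝ} (hc : ∑ n, c n = 0)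
    (h : ∫ x, |∑ n, c n * gaussCDF (μ n) σ x| = 0) : c = 0 := by
  set f := fun x => ∑ n, c n * gaussCDF (μ n) σ x
  have hf_cont : Continuous f := by
    have := continuous_gaussCDF hσ.le
    fun_prop
  have hf_ae : f =ᵐ[volume] 0 := by
    filter_upwards [(integral_eq_zero_iff_of_nonneg (fun x => abs_nonneg (f x))
      (integrable_sum_mul_gaussCDF hσ.le μ hc).abs).1 h] with x hx
    exact abs_eq_zero.1 hx
  have hf : f = 0 := (hf_cont.ae_eq_iff_eq volume continuous_const).1 hf_ae
  have hderiv : ∑ n, c n • gaussPDF (μ n) σ = 0 := by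
    ext x
    have hf' : HasDerivAt f (∑ n, c n * gaussPDF (μ n) σ x) x :=
      HasDerivAt.fun_sum fun n _ => (hasDerivAt_gaussCDF hσ.le (μ n) x).const_mul (c n)
    simpa using hf'.unique (hf ▸ hasDerivAt_const x 0)
  exact funext (Fintype.linearIndependent_iff.1 (linearIndependent_gaussPDF hσ.ne' hμ) c hderiv)

theorem Matrix.eq_zero_of_mulVec_eq_zero_of_nonpos {ι R : Type*} [Fintype ι] [Ring R]
    [LinearOrder R] [IsStrictOrderedRing R] {M : Matrix ι ι R} (hM : ∀ j i, 0 ≤ M j i)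
    (hcol : ∀ i, ∃ j, 0 < M j i) {v : ι → R} (hv : ∀ i, v i ≤ 0) (h : M *ᵥ v = 0) : v = 0 := by
  funext i
  obtain ⟨j, hj⟩ := hcol i
  have hterms : ∀ k ∈ Finset.univ, M j k * v k ≤ 0 :=
    fun k _ => mul_nonpos_of_nonneg_of_nonpos (hM j k) (hv k)
  have hji := (Finset.sum_eq_zero_iff_of_nonpos hterms).1 (congrFun h j) i (Finset.mem_univ i)
  exact (mul_eq_zero.1 hji).resolve_left hj.ne'

theorem eq_of_mulVec_min_sub_eq_zero {ι R : Type*} [Fintype ι] [Ring R] [LinearOrder R]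
    [IsStrictOrderedRing R] {M : Matrix ι ι R} (hM : ∀ j i, 0 ≤ M j i)
    (hcol : ∀ i, ∃ j, 0 < M j i) {p q : ι → R} (hpq : ∑ i, p i = ∑ i, q i)
    (h : M *ᵥ (fun i => min (p i - q i) 0) = 0) : p = q := by
  have hL := Matrix.eq_zero_of_mulVec_eq_zero_of_nonpos hM hcol (fun i => min_le_right _ _) h
  have hle : ∀ i ∈ Finset.univ, q i ≤ p i := fun i _ => by simpa using congrFun hL i
  exact funext fun i => ((Finset.sum_eq_sum_iff_of_le hle).1 hpq.symm i (Finset.mem_univ i)).symm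

theorem l1norm_eq_zero_iff {N : ℕ} {v : Fin N → ℝ} : l1norm v = 0 ↔ v = 0 := by
  simp [l1norm, Finset.sum_eq_zero_iff_of_nonneg, funext_iff]

theorem stmt_9_general {N : ℕ} (hN : 2 ≤ N) (σ : ℝ) (hσ : 0 < σ)
    (μ : Fin N → ℝ) (hμ : Function.Injective μ)
    (π π' : Fin N → ℝ)
    (hπs : ∑ n, π n = 1)
    (hπ's : ∑ n, π' n = 1)
    (M : Matrix (Fin N) (Fin N) ℝ)
    (hM : ∀ j i, M j i = if i = j then 0 else gaussPDF (μ i) σ (μ j))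
    (Lm : Fin N → ℝ) (hLm : ∀ i, Lm i = min (π i - π' i) 0) :
    ((∫ x : ℝ, |∑ n, (π n - π' n) * gaussCDF (μ n) σ x| = 0) ↔
      l1norm (-(M *ᵥ Lm)) = 0) ∧
    ((∫ x : ℝ, |∑ n, (π n - π' n) * gaussCDF (μ n) σ x| = 0) ↔ π = π') := by
  obtain rfl : Lm = fun i => min (π i - π' i) 0 := funext hLm
  have hW : (∫ x : ℝ, |∑ n, (π n - π' n) * gaussCDF (μ n) σ x| = 0) ↔ π = π' := by
    refine ⟨fun h => sub_eq_zero.1 ?_, by rintro rfl; simp⟩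
    exact eq_zero_of_integral_abs_sum_mul_gaussCDF_eq_zero hσ hμ
      (by simp [Finset.sum_sub_distrib, hπs, hπ's]) h
  have hM_nonneg : ∀ j i, 0 ≤ M j i := fun j i => by
    rw [hM]
    split_ifs
    exacts [le_rfl, (gaussPDF_pos hσ _ _).le]
  have hM_col : ∀ i, ∃ j, 0 < M j i := fun i => by
    have := Fin.nontrivial_iff_two_le.2 hN
    obtain ⟨j, hj⟩ := exists_ne i
    exact ⟨j, by rw [hM, if_neg hj.symm]; exact gaussPDF_pos hσ _ _⟩
  have hG : l1norm (-(M *ᵥ fun i => min (π i - π' i) 0)) = 0 ↔ π = π' := by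
    rw [l1norm_eq_zero_iff, neg_eq_zero]
    refine ⟨eq_of_mulVec_min_sub_eq_zero hM_nonneg hM_col (hπs.trans hπ's.symm), ?_⟩
    rintro rfl
    simp only [sub_self, min_self]
    exact M.mulVec_zero
  exact ⟨hW.trans hG.symm, hW⟩

/-- the vanishing of the 1-Wasserstein distance
`∫_ℝ |∑ (πₙ - π'ₙ) Fₙ(x)| dx` is equivalent to the vanishing of `‖NGMG(L⁻)‖₁ = ‖-M L⁻‖₁`,
and each is equivalent to `π = π'`. -/
theorem stmt_9 {N : ℕ} (hN : 2 ≤ N) (σ : ℝ) (hσ : 0 < σ)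
    (μ : Fin N → ℝ) (hμ : Function.Injective μ)
    (π π' : Fin N → ℝ)
    (hπ : ∀ n, 0 ≤ π n) (hπs : ∑ n, π n = 1)
    (hπ' : ∀ n, 0 ≤ π' n) (hπ's : ∑ n, π' n = 1)
    (M : Matrix (Fin N) (Fin N) ℝ)
    (hM : ∀ j i, M j i = if i = j then 0 else gaussPDF (μ i) σ (μ j))
    (Lm : Fin N → ℝ) (hLm : ∀ i, Lm i = min (π i - π' i) 0) :
    ((∫ x : ℝ, |∑ n, (π n - π' n) * gaussCDF (μ n) σ x| = 0) ↔
      l1norm (-(M *ᵥ Lm)) = 0) ∧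
    ((∫ x : ℝ, |∑ n, (π n - π' n) * gaussCDF (μ n) σ x| = 0) ↔ π = π') :=
  stmt_9_general hN σ hσ μ hμ π π' hπs hπ's M hM Lm hLm
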